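/- arXiv:0709.4350 — 2 statements merged into one kernel-verified Lean document; each statement's English description precedes it below -/
import Mathlib

section
/- Let V and W be complex vector spaces and c : V × V → W a bilinear alternating map (a 'cup product'). Suppose dim V ≥ 2 is finite and there exists an alternating trilinear form μ ≠ 0 on V and a linear functional structure such that c is determined by μ via a perfect pairing (i.e., c(x,y) = 0 iff μ(x,y,z) = 0 for all z ∈ V). Then the image of c is not 1-dimensional. -/
/-!
If the image of `c` were spanned by a single functional `f`, then `μ(x, y, z) = t(x, y) f(z)`, so
`μ` vanishes as soon as its last argument lies in the hyperplane `ker f`; by antisymmetry, as soon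
as any argument does. But then `μ = 0`: for `f(y) ≠ 0` the vector `f(y) x - f(x) y` lies in `ker f`,
and replacing `x` by it multiplies `μ(x, y, z)` by `f(y)`.
-/

namespace AlternatingMap

section Semiring

variable {R M N ι : Type*} [Semiring R] [AddCommMonoid M] [Module R M] [AddCommGroup N] [Module R N]

theorem map_eq_zero_of_mem {f : M [⋀^ι]→ₗ[R] N} {p : Submodule R M} {i : ι}
    (hf : ∀ v : ι → M, v i ∈ p → f v = 0) {v : ι → M} {j : ι} (hv : v j ∈ p) : f v = 0 := by
  classical
  obtain rfl | hij := eq_or_ne i j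
  · exact hf v hv
  · rw [← neg_eq_zero, ← f.map_swap v hij]
    exact hf _ (by simpa using hv)

end Semiring

variable {K M N ι : Type*} [Field K] [AddCommGroup M] [Module K M] [AddCommGroup N] [Module K N]

theorem eq_zero_of_map_eq_zero_of_mem_ker {f : M [⋀^ι]→ₗ[K] N} (φ : Module.Dual K M) {i j : ι}
    (hij : i ≠ j) (hf : ∀ v : ι → M, v i ∈ LinearMap.ker φ → f v = 0) : f = 0 := by
  classical
  ext v
  by_cases hj : φ (v j) = 0
  · exact map_eq_zero_of_mem hf (j := j) hj
  have hupdate : f (Function.update v i (φ (v j) • v i - φ (v i) • v j)) = φ (v j) • f v := by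
    rw [f.map_update_sub, f.map_update_smul, f.map_update_smul, Function.update_eq_self,
      f.map_update_self _ hij, smul_zero, sub_zero]
  have hmem : φ (v j) • v i - φ (v i) • v j ∈ LinearMap.ker φ := by
    simp only [LinearMap.mem_ker, map_sub, map_smul, smul_eq_mul, mul_comm, sub_self]
  have hzero : φ (v j) • f v = 0 := by
    rw [← hupdate]
    exact hf _ (by simpa using hmem)
  exact (smul_eq_zero.1 hzero).resolve_left hj

end AlternatingMap

theorem cup_product_image_not_one_dimensional_general
    (V : Type*) [AddCommGroup V] [Module ℂ V]
    (μ : V [⋀^Fin 3]→ₗ[ℂ] ℂ) (hμ : μ ≠ 0)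
    (c : V → V → Module.Dual ℂ V)
    (hc : ∀ x y z : V, c x y z = μ ![x, y, z]) :
    Module.finrank ℂ (Submodule.span ℂ {w : Module.Dual ℂ V | ∃ x y : V, w = c x y}) ≠ 1 := by
  intro hrank
  obtain ⟨⟨f, hfS⟩, -, hf⟩ := finrank_eq_one_iff'.1 hrank
  refine hμ (μ.eq_zero_of_map_eq_zero_of_mem_ker f (i := 2) (j := 0) (by decide) fun v hv => ?_)
  obtain ⟨t, ht⟩ := hf ⟨c (v 0) (v 1), Submodule.subset_span ⟨_, _, rfl⟩⟩
  have hc_eq : c (v 0) (v 1) = t • f := congrArg Subtype.val ht.symm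
  calc μ v = c (v 0) (v 1) (v 2) := by rw [hc, ← FinVec.etaExpand_eq v]; rfl
    _ = 0 := by rw [hc_eq, LinearMap.smul_apply, LinearMap.mem_ker.1 hv, smul_zero]

theorem cup_product_image_not_one_dimensional
    (V : Type*) [AddCommGroup V] [Module ℂ V] [FiniteDimensional ℂ V]
    (hV : 2 ≤ Module.finrank ℂ V)
    (μ : V [⋀^Fin 3]→ₗ[ℂ] ℂ) (hμ : μ ≠ 0)
    (c : V → V → Module.Dual ℂ V)
    (hc : ∀ x y z : V, c x y z = μ ![x, y, z]) :
    Module.finrank ℂ (Submodule.span ℂ {w : Module.Dual ℂ V | ∃ x y : V, w = c x y}) ≠ 1 :=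
  cup_product_image_not_one_dimensional_general V μ hμ c hc
end

section
/- Let V be an n-dimensional complex vector space with n even, μ a nonzero alternating trilinear form on V, and c : V ∧ V → V* defined by c(x ∧ y)(z) = μ(x,y,z). Then every x ∈ V lies in the first resonance variety: for each x there exists y ∈ V with y ∉ ℂ·x and c(x ∧ y) = 0. -/
/-!
For fixed `x`, the map `y ↦ c(x ∧ y)` is an alternating bilinear form `B` on `V` with `x` in its
kernel. An alternating form is nondegenerate on a complement of its kernel, and a nondegenerate
alternating form lives in even dimension, since its Gram matrix satisfies
`det A = det Aᵀ = (-1)^m det A`. Hence `dim ker B ≡ n ≡ 0 (mod 2)`; as `ker B ≠ 0` (it contains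
`x`, or is all of `V ≠ 0` when `x = 0`), `dim ker B ≥ 2`, so `ker B` is not contained in `ℂ x`.
-/

open Module
open scoped Matrix

theorem Matrix.det_eq_zero_of_transpose_eq_neg {n R : Type*} [Fintype n] [DecidableEq n]
    [CommRing R] [IsAddTorsionFree R] {A : Matrix n n R} (hA : Aᵀ = -A)
    (hn : Odd (Fintype.card n)) : A.det = 0 := by
  rw [← self_eq_neg]
  conv_lhs => rw [← det_transpose, hA, det_neg, hn.neg_one_pow, neg_one_mul]

namespace AlternatingMap

variable {R M N : Type*} [CommSemiring R] [AddCommMonoid M] [Module R M] [AddCommMonoid N]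
  [Module R N]

theorem nontrivial_of_ne_zero {ι : Type*} [Nonempty ι] {f : M [⋀^ι]→ₗ[R] N} (hf : f ≠ 0) :
    Nontrivial M := by
  contrapose! hf
  ext v
  rw [Subsingleton.elim v 0, f.map_zero, zero_apply]

noncomputable def toBilin (f : M [⋀^Fin 2]→ₗ[R] N) : M →ₗ[R] M →ₗ[R] N :=
  (curryLeftLinearMap ∘ₗ f.curryLeft).compr₂
    (constLinearEquivOfIsEmpty (R' := R) (M'' := M) (N'' := N) (ι := Fin 0)).symm.toLinearMap

@[simp]
theorem toBilin_apply (f : M [⋀^Fin 2]→ₗ[R] N) (x y : M) : f.toBilin x y = f ![x, y] := by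
  simp [toBilin]

theorem toBilin_self (f : M [⋀^Fin 2]→ₗ[R] N) (x : M) : f.toBilin x x = 0 := by
  rw [toBilin_apply]
  exact f.map_eq_zero_of_eq ![x, x] (i := 0) (j := 1) rfl (by decide)

end AlternatingMap

namespace LinearMap.BilinForm

theorem IsRefl.nondegenerate_restrict_of_isCompl_ker {R M : Type*} [CommRing R]
    [AddCommGroup M] [Module R M] {B : LinearMap.BilinForm R M} (hB : B.IsRefl)
    {W : Submodule R M} (hW : IsCompl W (LinearMap.ker B)) : (B.restrict W).Nondegenerate := by
  refine (LinearMap.IsRefl.nondegenerate_iff_separatingLeft (B := B.restrict W)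
    (fun x y => hB x y)).mpr ?_
  rw [LinearMap.separatingLeft_iff_ker_eq_bot, ker_restrict_eq_of_codisjoint hW.codisjoint
      (fun w _ k hk => hB k w (by rw [LinearMap.mem_ker.mp hk]; rfl)),
    ← Submodule.disjoint_iff_comap_eq_bot]
  exact hW.disjoint

variable {K V : Type*} [Field K] [CharZero K] [AddCommGroup V] [Module K V]
  [FiniteDimensional K V] {B : LinearMap.BilinForm K V}

theorem IsAlt.even_finrank_of_nondegenerate (hB : B.IsAlt) (hnd : B.Nondegenerate) :
    Even (finrank K V) := by
  let b := finBasis K V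
  by_contra hodd
  refine (nondegenerate_iff_det_ne_zero b).mp hnd
    (Matrix.det_eq_zero_of_transpose_eq_neg ?_ (by simpa using hodd))
  ext i j
  simpa [toMatrix_apply] using (hB.neg_eq (b i) (b j)).symm

theorem IsAlt.even_finrank_ker_iff (hB : B.IsAlt) :
    Even (finrank K (LinearMap.ker B)) ↔ Even (finrank K V) := by
  obtain ⟨W, hW⟩ := (LinearMap.ker B).exists_isCompl
  have hW_even : Even (finrank K W) := IsAlt.even_finrank_of_nondegenerate (fun w => hB w)
    (hB.isRefl.nondegenerate_restrict_of_isCompl_ker hW.symm)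
  rw [← Submodule.finrank_add_eq_of_isCompl hW, Nat.even_add]
  tauto

theorem IsAlt.exists_mem_ker_notMem_span_singleton (hB : B.IsAlt) (hV : Even (finrank K V))
    (hker : LinearMap.ker B ≠ ⊥) (x : V) : ∃ y ∈ LinearMap.ker B, y ∉ K ∙ x := by
  have hker_two : 2 ≤ finrank K (LinearMap.ker B) := by
    obtain ⟨k, hk⟩ := hB.even_finrank_ker_iff.mpr hV
    have := Submodule.one_le_finrank_iff.mpr hker
    omega
  have hspan : finrank K (K ∙ x) ≤ 1 := by simpa using finrank_span_le_card ({x} : Set V)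
  refine SetLike.not_le_iff_exists.mp fun hle => ?_
  have := Submodule.finrank_mono hle
  omega

end LinearMap.BilinForm

theorem resonance_is_everything_for_even_rank
    (V : Type*) [AddCommGroup V] [Module ℂ V] [FiniteDimensional ℂ V]
    (n : ℕ) (hn : Module.finrank ℂ V = n) (heven : Even n)
    (μ : V [⋀^Fin 3]→ₗ[ℂ] ℂ) (hμ : μ ≠ 0)
    (c : V [⋀^Fin 2]→ₗ[ℂ] Module.Dual ℂ V)
    (hc : ∀ x y z : V, c ![x, y] z = μ ![x, y, z]) :
    ∀ x : V, ∃ y : V, y ∉ Submodule.span ℂ {x} ∧ c ![x, y] = 0 := by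
  intro x
  set B : LinearMap.BilinForm ℂ V := c.toBilin x
  have hB : B.IsAlt := fun y => by
    simpa [B, hc] using μ.map_eq_zero_of_eq ![x, y, y] (i := 1) (j := 2) rfl (by decide)
  have hker : LinearMap.ker B ≠ ⊥ := by
    rcases eq_or_ne x 0 with rfl | hx
    · have := μ.nontrivial_of_ne_zero hμ
      simp [B]
    · exact (Submodule.ne_bot_iff _).mpr ⟨x, c.toBilin_self x, hx⟩
  obtain ⟨y, hy, hyx⟩ := hB.exists_mem_ker_notMem_span_singleton (hn ▸ heven) hker x
  exact ⟨y, hyx, by simpa [B] using hy⟩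
end
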